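/- Let {c_{jk}}_{j,k=1}^∞ ⊂ ℂ, let {b(n)}_{n=1}^∞ be a nonnegative sequence tending monotonically to infinity, let λ ≥ 2 be an integer, let p ≥ 1 and r ∈ ℕ. Assume j·k·c_{jk} → 0 as j + k → ∞, and that there is C > 0 such that for all j ∈ ℕ and all n ≥ λ: (Σ_{k=n}^{2n−1} |Δ_{0r}c_{jk}|^p)^{1/p} ≤ (C/n) · max_{b(n) ≤ N ≤ λ b(n)} Σ_{k=N}^{2N} |c_{jk}|. Then n^{1/p} · sup_{j ≥ m} ( j · Σ_{k=n}^∞ |Δ_{0r}c_{jk}| ) → 0 as m + n → ∞. -/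

import Mathlib

set_option maxHeartbeats 1000000

noncomputable section

lemma aux_tsum_le {f : ℕ → ℝ} {B : ℝ} (hB : 0 ≤ B)
    (h : ∀ s : Finset ℕ, ∑ k ∈ s, f k ≤ B) : ∑' k, f k ≤ B := by
  by_cases hs : Summable f
  · exact Summable.tsum_le_of_sum_le hs h
  · rw [tsum_eq_zero_of_not_summable hs]; exact hB

lemma aux_holder (t : Finset ℕ) (a : ℕ → ℝ) (ha : ∀ k, 0 ≤ a k) {p : ℝ} (hp : 1 ≤ p) :
    ∑ k ∈ t, a k ≤ (t.card : ℝ) ^ (1 - 1/p) * (∑ k ∈ t, a k ^ p) ^ (1/p) := by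
  have h := Real.inner_le_weight_mul_Lp_of_nonneg t hp (fun _ => 1) a
    (fun _ => zero_le_one) ha
  simpa [one_div] using h

lemma aux_geom {q : ℝ} (h0 : 0 ≤ q) (h1 : q < 1) (I : ℕ) :
    ∑ i ∈ Finset.range I, q ^ i ≤ (1 - q)⁻¹ := by
  have := Summable.sum_le_tsum (Finset.range I) (fun i _ => pow_nonneg h0 i)
    (summable_geometric_of_lt_one h0 h1)
  rwa [tsum_geometric_of_lt_one h0 h1] at this

theorem statement11 (c : ℕ → ℕ → ℂ) (b : ℕ → ℝ) (hb0 : ∀ n, 0 ≤ b n)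
    (hbmono : Monotone b) (hbtop : Filter.Tendsto b Filter.atTop Filter.atTop)
    (lam : ℕ) (hlam : 2 ≤ lam) (p : ℝ) (hp : 1 ≤ p) (r : ℕ) (hr : 1 ≤ r)
    (C : ℝ) (hC : 0 < C)
    (hsmall : ∀ ε : ℝ, 0 < ε → ∃ m₀ : ℕ, ∀ j k : ℕ, m₀ < j + k →
      (j : ℝ) * k * ‖c j k‖ < ε)
    (hineq : ∀ j n : ℕ, 1 ≤ j → lam ≤ n →
      ∃ N : ℕ, b n ≤ N ∧ (N : ℝ) ≤ lam * b n ∧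
        (∑ k ∈ Finset.Icc n (2*n-1), ‖c j k - c j (k+r)‖ ^ p) ^ (1/p)
          ≤ C / n * ∑ k ∈ Finset.Icc N (2*N), ‖c j k‖) :
    ∀ ε : ℝ, 0 < ε → ∃ m₀ : ℕ, ∀ m n : ℕ, m₀ < m + n → 1 ≤ m → 1 ≤ n →
      ∀ j : ℕ, m ≤ j →
        (n : ℝ) ^ (1/p) * (j : ℝ) *
          (∑' k : ℕ, if n ≤ k then ‖c j k - c j (k+r)‖ else 0) < ε := by
  intro ε hε
  have hp0 : (0:ℝ) < p := lt_of_lt_of_le one_pos hp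
  have hip0 : (0:ℝ) < 1/p := by positivity
  have hip1 : 1/p ≤ 1 := by
    rw [div_le_one hp0]; linarith
  set q : ℝ := (2:ℝ) ^ (-(1/p)) with hqdef
  have hq0 : 0 < q := Real.rpow_pos_of_pos (by norm_num) _
  have hq1 : q < 1 := Real.rpow_lt_one_of_one_lt_of_neg (by norm_num) (by linarith)
  obtain ⟨n₁, hn₁⟩ : ∃ n₁, (1:ℝ) ≤ b n₁ := (hbtop.eventually_ge_atTop 1).exists
  set L : ℕ := max lam n₁ with hLdef
  have hL1 : 1 ≤ L := le_trans (by omega) (le_max_left lam n₁)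
  set K : ℝ := 2 * (L:ℝ)^2 + 2 * C * (1 - q)⁻¹ with hKdef
  have hK0 : 0 < K := by
    have h1 : 0 < (1 - q)⁻¹ := inv_pos.mpr (by linarith)
    have hL0 : (0:ℝ) < (L:ℝ) := by exact_mod_cast hL1
    have h2 : 0 < 2 * C * (1 - q)⁻¹ := by positivity
    have h3 : (0:ℝ) ≤ 2 * (L:ℝ)^2 := by positivity
    rw [hKdef]
    linarith
  set ε' : ℝ := ε / (K + 1) with hε'def
  have hε'0 : 0 < ε' := by positivity
  obtain ⟨M₀, hM₀⟩ := hsmall ε' hε'0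
  obtain ⟨n₂, hn₂⟩ : ∃ n₂, (M₀:ℝ) ≤ b n₂ := (hbtop.eventually_ge_atTop _).exists
  refine ⟨M₀ + n₂ + L, ?_⟩
  intro m n hmn hm1 hn1 j hj
  have hj1 : 1 ≤ j := le_trans hm1 hj
  have hj0 : (0:ℝ) < j := by exact_mod_cast hj1
  have hn0 : (0:ℝ) < n := by exact_mod_cast hn1
  set L' : ℕ := max n L with hL'def
  have hnL' : n ≤ L' := le_max_left _ _
  have hLL' : L ≤ L' := le_max_right _ _
  -- bound on individual terms with k ≥ n
  have hcb : ∀ k : ℕ, 1 ≤ k → M₀ < j + k → ‖c j k‖ ≤ ε' / ((j:ℝ) * k) := by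
    intro k hk1 hjk
    have h := hM₀ j k hjk
    have hk0 : (0:ℝ) < k := by exact_mod_cast hk1
    rw [le_div_iff₀ (by positivity)]
    nlinarith [norm_nonneg (c j k)]
  have hterm : ∀ k : ℕ, n ≤ k → ‖c j k - c j (k+r)‖ ≤ 2 * ε' / j := by
    intro k hk
    have hk1 : 1 ≤ k := le_trans hn1 hk
    have hjk : M₀ < j + k := by omega
    have h1 : ‖c j k‖ ≤ ε' / ((j:ℝ) * k) := hcb k hk1 hjk
    have h2 : ‖c j (k+r)‖ ≤ ε' / ((j:ℝ) * (k+r)) := by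
      have := hcb (k+r) (by omega) (by omega)
      simpa using this
    have hk0 : (1:ℝ) ≤ k := by exact_mod_cast hk1
    have hkr0 : (1:ℝ) ≤ (k:ℝ) + r := by
      have : (0:ℝ) ≤ r := by positivity
      linarith
    have e1 : ε' / ((j:ℝ) * k) ≤ ε' / j := by
      apply div_le_div_of_nonneg_left hε'0.le hj0
      exact le_mul_of_one_le_right hj0.le hk0
    have e2 : ε' / ((j:ℝ) * (k+r)) ≤ ε' / j := by
      apply div_le_div_of_nonneg_left hε'0.le hj0
      exact le_mul_of_one_le_right hj0.le hkr0
    calc ‖c j k - c j (k+r)‖ ≤ ‖c j k‖ + ‖c j (k+r)‖ := norm_sub_le _ _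
      _ ≤ ε' / j + ε' / j := by push_cast at h2 ⊢; linarith
      _ = 2 * ε' / j := by ring
  -- block bound
  have hblock : ∀ s : ℕ, L' ≤ s →
      ∑ k ∈ Finset.Ico s (2*s), ‖c j k - c j (k+r)‖
        ≤ 2 * C * ε' / j * (s:ℝ) ^ (-(1/p)) := by
    intro s hs
    have hsL : L ≤ s := le_trans hLL' hs
    have hs1 : 1 ≤ s := le_trans hL1 hsL
    have hs0 : (0:ℝ) < s := by exact_mod_cast hs1
    obtain ⟨N, hN1, hN2, hN3⟩ := hineq j s hj1 (le_trans (le_max_left lam n₁) hsL)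
    have hbs1 : (1:ℝ) ≤ b s := le_trans hn₁ (hbmono (le_trans (le_max_right lam n₁) hsL))
    have hNr1 : (1:ℝ) ≤ N := le_trans hbs1 hN1
    have hNn1 : 1 ≤ N := by exact_mod_cast hNr1
    have hN0 : (0:ℝ) < N := by linarith
    -- M₀ < j + N
    have hjN : M₀ < j + N := by
      rcases le_or_gt n₂ n with h | h
      · have : (M₀:ℝ) ≤ N := le_trans (le_trans hn₂ (hbmono h))
          (le_trans (hbmono (le_trans hnL' hs)) hN1)
        have : M₀ ≤ N := by exact_mod_cast this
        omega
      · have : M₀ < m := by omega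
        omega
    -- bound S
    have hS : ∑ k ∈ Finset.Icc N (2*N), ‖c j k‖ ≤ 2 * ε' / j := by
      have hstep : ∀ k ∈ Finset.Icc N (2*N), ‖c j k‖ ≤ ε' / ((j:ℝ) * N) := by
        intro k hk
        rw [Finset.mem_Icc] at hk
        have h1 := hcb k (le_trans hNn1 hk.1) (by omega)
        refine le_trans h1 ?_
        apply div_le_div_of_nonneg_left hε'0.le (by positivity)
        have : (N:ℝ) ≤ k := by exact_mod_cast hk.1
        nlinarith
      calc ∑ k ∈ Finset.Icc N (2*N), ‖c j k‖
          ≤ ∑ _k ∈ Finset.Icc N (2*N), ε' / ((j:ℝ) * N) := Finset.sum_le_sum hstep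
        _ = ((N:ℝ) + 1) * (ε' / ((j:ℝ) * N)) := by
            rw [Finset.sum_const, Nat.card_Icc]
            have : 2*N + 1 - N = N + 1 := by omega
            rw [this]; push_cast; ring
        _ ≤ (2*(N:ℝ)) * (ε' / ((j:ℝ) * N)) := by
            have hd : (0:ℝ) ≤ ε' / ((j:ℝ)*N) := by positivity
            have h5 : (N:ℝ) + 1 ≤ 2*N := by linarith
            exact mul_le_mul_of_nonneg_right h5 hd
        _ = 2 * ε' / j := by
            have hjne : (j:ℝ) ≠ 0 := hj0.ne'
            have hNne : (N:ℝ) ≠ 0 := hN0.ne'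
            field_simp
    -- Hölder
    have hIco : Finset.Ico s (2*s) = Finset.Icc s (2*s-1) := by
      rw [← Finset.Ico_add_one_right_eq_Icc]
      congr 1
      omega
    have hcard : ((Finset.Icc s (2*s-1)).card : ℝ) = (s:ℝ) := by
      rw [Nat.card_Icc]
      congr 1
      omega
    have hhold := aux_holder (Finset.Icc s (2*s-1)) (fun k => ‖c j k - c j (k+r)‖)
      (fun k => norm_nonneg _) hp
    rw [hcard] at hhold
    have hp3 : (∑ k ∈ Finset.Icc s (2*s-1), ‖c j k - c j (k+r)‖ ^ p) ^ (1/p)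
        ≤ C / s * (2 * ε' / j) := by
      refine le_trans hN3 ?_
      have : (0:ℝ) < C / s := by positivity
      exact mul_le_mul_of_nonneg_left hS this.le
    have hsplit : (s:ℝ) ^ (1 - 1/p) = (s:ℝ) ^ (-(1/p)) * s := by
      rw [show (1 - 1/p) = -(1/p) + 1 by ring, Real.rpow_add hs0, Real.rpow_one]
    rw [hIco]
    calc ∑ k ∈ Finset.Icc s (2*s-1), ‖c j k - c j (k+r)‖
        ≤ (s:ℝ) ^ (1 - 1/p) * (∑ k ∈ Finset.Icc s (2*s-1), ‖c j k - c j (k+r)‖ ^ p) ^ (1/p) :=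
          hhold
      _ ≤ (s:ℝ) ^ (1 - 1/p) * (C / s * (2 * ε' / j)) := by
          apply mul_le_mul_of_nonneg_left hp3 (Real.rpow_nonneg hs0.le _)
      _ = 2 * C * ε' / j * (s:ℝ) ^ (-(1/p)) := by
          rw [hsplit]
          have hjne : (j:ℝ) ≠ 0 := hj0.ne'
          have hsne : (s:ℝ) ≠ 0 := hs0.ne'
          field_simp
  -- dyadic sum
  have hL'0 : (0:ℝ) < (L':ℝ) := by
    have : 1 ≤ L' := le_trans hL1 hLL'
    exact_mod_cast this
  have hdy : ∀ I : ℕ, ∑ k ∈ Finset.Ico L' (2^I * L'), ‖c j k - c j (k+r)‖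
      ≤ 2 * C * ε' / j * (L':ℝ) ^ (-(1/p)) * ∑ i ∈ Finset.range I, q ^ i := by
    intro I
    induction I with
    | zero => simp
    | succ I ih =>
      have hle1 : L' ≤ 2^I * L' := Nat.le_mul_of_pos_left L' (Nat.pow_pos (by norm_num))
      have hle2 : 2^I * L' ≤ 2^(I+1) * L' := by
        have : (2:ℕ)^I ≤ 2^(I+1) := Nat.pow_le_pow_right (by norm_num) (by omega)
        exact Nat.mul_le_mul_right _ this
      rw [← Finset.sum_Ico_consecutive _ hle1 hle2]
      have hblk := hblock (2^I * L') hle1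
      have h2 : 2 * (2^I * L') = 2^(I+1) * L' := by ring
      rw [h2] at hblk
      have hcast : ((2^I * L' : ℕ):ℝ) ^ (-(1/p)) = q ^ I * (L':ℝ) ^ (-(1/p)) := by
        push_cast
        rw [Real.mul_rpow (by positivity) hL'0.le]
        congr 1
        rw [← Real.rpow_natCast 2 I, ← Real.rpow_mul (by norm_num), mul_comm (I:ℝ),
          Real.rpow_mul (by norm_num), Real.rpow_natCast]
      rw [hcast] at hblk
      calc ∑ k ∈ Finset.Ico L' (2^I * L'), ‖c j k - c j (k+r)‖
            + ∑ k ∈ Finset.Ico (2^I * L') (2^(I+1) * L'), ‖c j k - c j (k+r)‖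
          ≤ 2 * C * ε' / j * (L':ℝ) ^ (-(1/p)) * ∑ i ∈ Finset.range I, q ^ i
            + 2 * C * ε' / j * (q ^ I * (L':ℝ) ^ (-(1/p))) := add_le_add ih hblk
        _ = 2 * C * ε' / j * (L':ℝ) ^ (-(1/p)) * ∑ i ∈ Finset.range (I+1), q ^ i := by
            rw [Finset.sum_range_succ]; ring
  -- total bound B
  set P2 : ℝ := 2 * C * ε' / j * (L':ℝ) ^ (-(1/p)) * (1 - q)⁻¹ with hP2def
  set B : ℝ := ((L':ℝ) - n) * (2 * ε' / j) + P2 with hBdef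
  have hL'n : (0:ℝ) ≤ (L':ℝ) - n := by
    have : (n:ℝ) ≤ L' := by exact_mod_cast hnL'
    linarith
  have hP2nn : 0 ≤ P2 := by
    have h1 : (0:ℝ) ≤ (L':ℝ) ^ (-(1/p)) := Real.rpow_nonneg hL'0.le _
    have h2 : (0:ℝ) ≤ (1-q)⁻¹ := (inv_pos.mpr (by linarith : (0:ℝ) < 1 - q)).le
    positivity
  have hBnn : 0 ≤ B := add_nonneg (mul_nonneg hL'n (by positivity)) hP2nn
  have htsum : (∑' k : ℕ, if n ≤ k then ‖c j k - c j (k+r)‖ else 0) ≤ B := by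
    apply aux_tsum_le hBnn
    intro s
    set I : ℕ := s.sup id + 1 with hIdef
    have hsub : s.filter (fun k => n ≤ k) ⊆ Finset.Ico n (2^I * L') := by
      intro k hk
      rw [Finset.mem_filter] at hk
      rw [Finset.mem_Ico]
      refine ⟨hk.2, ?_⟩
      have h1 : k ≤ s.sup id := Finset.le_sup (f := id) hk.1
      have h2 : s.sup id < 2 ^ (s.sup id) := Nat.lt_two_pow_self
      have h3 : (2:ℕ)^(s.sup id) ≤ 2^I := Nat.pow_le_pow_right (by norm_num) (by omega)
      have hL'1 : 1 ≤ L' := le_trans hL1 hLL'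
      calc k < 2^I := by omega
        _ ≤ 2^I * L' := Nat.le_mul_of_pos_right _ (by omega)
    have hle1 : n ≤ L' := hnL'
    have hle2 : L' ≤ 2^I * L' := Nat.le_mul_of_pos_left L' (Nat.pow_pos (by norm_num))
    calc ∑ k ∈ s, (if n ≤ k then ‖c j k - c j (k+r)‖ else 0)
        = ∑ k ∈ s.filter (fun k => n ≤ k), ‖c j k - c j (k+r)‖ := (Finset.sum_filter _ _).symm
      _ ≤ ∑ k ∈ Finset.Ico n (2^I * L'), ‖c j k - c j (k+r)‖ :=
          Finset.sum_le_sum_of_subset_of_nonneg hsub (fun k _ _ => norm_nonneg _)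
      _ = ∑ k ∈ Finset.Ico n L', ‖c j k - c j (k+r)‖
          + ∑ k ∈ Finset.Ico L' (2^I * L'), ‖c j k - c j (k+r)‖ :=
          (Finset.sum_Ico_consecutive _ hle1 hle2).symm
      _ ≤ ((L':ℝ) - n) * (2 * ε' / j) + P2 := by
          apply add_le_add
          · calc ∑ k ∈ Finset.Ico n L', ‖c j k - c j (k+r)‖
                ≤ ∑ _k ∈ Finset.Ico n L', (2 * ε' / j) := by
                  apply Finset.sum_le_sum
                  intro k hk
                  exact hterm k (Finset.mem_Ico.mp hk).1
              _ = ((L':ℝ) - n) * (2 * ε' / j) := by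
                  rw [Finset.sum_const, Nat.card_Ico, nsmul_eq_mul, Nat.cast_sub hnL']
          · calc ∑ k ∈ Finset.Ico L' (2^I * L'), ‖c j k - c j (k+r)‖
                ≤ 2 * C * ε' / j * (L':ℝ) ^ (-(1/p)) * ∑ i ∈ Finset.range I, q ^ i := hdy I
              _ ≤ P2 := by
                  rw [hP2def]
                  apply mul_le_mul_of_nonneg_left (aux_geom hq0.le hq1 I)
                  have h1 : (0:ℝ) ≤ (L':ℝ) ^ (-(1/p)) := Real.rpow_nonneg hL'0.le _
                  positivity
  -- final computation
  have hnp : (0:ℝ) ≤ (n:ℝ)^(1/p) * j := by positivity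
  have hfin1 : (n:ℝ)^(1/p) * j * B ≤ K * ε' := by
    have e1 : (n:ℝ)^(1/p) * ((L':ℝ) - n) ≤ (L:ℝ)^2 := by
      rcases le_or_gt L n with h | h
      · have : L' = n := by omega
        rw [this]
        simp
      · have hL'L : L' = L := by omega
        have h1 : (n:ℝ)^(1/p) ≤ (n:ℝ)^(1:ℝ) := by
          apply Real.rpow_le_rpow_of_exponent_le _ hip1
          exact_mod_cast hn1
        rw [Real.rpow_one] at h1
        have h2 : (n:ℝ) ≤ L := by exact_mod_cast h.le
        have h3 : (L':ℝ) - n ≤ L := by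
          rw [hL'L]
          linarith [hn0]
        have h4 : (0:ℝ) ≤ (n:ℝ)^(1/p) := by positivity
        nlinarith
    have e2 : (n:ℝ)^(1/p) * (L':ℝ)^(-(1/p)) ≤ 1 := by
      have h1 : (n:ℝ)^(1/p) ≤ (L':ℝ)^(1/p) := by
        apply Real.rpow_le_rpow hn0.le _ hip0.le
        exact_mod_cast hnL'
      have h2 : (L':ℝ)^(-(1/p)) = ((L':ℝ)^(1/p))⁻¹ := Real.rpow_neg hL'0.le _
      have h3 : (0:ℝ) < (L':ℝ)^(1/p) := Real.rpow_pos_of_pos hL'0 _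
      rw [h2, ← div_eq_mul_inv, div_le_one h3]
      exact h1
    have expand : (n:ℝ)^(1/p) * j * B
        = 2*ε'*((n:ℝ)^(1/p)*((L':ℝ)-n)) + 2*C*ε'*(1-q)⁻¹*((n:ℝ)^(1/p)*(L':ℝ)^(-(1/p))) := by
      rw [hBdef, hP2def]
      have hjne : (j:ℝ) ≠ 0 := hj0.ne'
      have hqne : (1:ℝ) - q ≠ 0 := by
        have : 0 < 1 - q := by linarith
        exact this.ne'
      field_simp
    have b1 : 2*ε'*((n:ℝ)^(1/p)*((L':ℝ)-n)) ≤ 2*ε'*(L:ℝ)^2 :=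
      mul_le_mul_of_nonneg_left e1 (by positivity)
    have b2 : 2*C*ε'*(1-q)⁻¹*((n:ℝ)^(1/p)*(L':ℝ)^(-(1/p))) ≤ 2*C*ε'*(1-q)⁻¹*1 := by
      apply mul_le_mul_of_nonneg_left e2
      have h9 : (0:ℝ) < (1-q)⁻¹ := inv_pos.mpr (by linarith)
      positivity
    rw [expand, hKdef]
    linarith
  have hfin2 : K * ε' < ε := by
    rw [hε'def]
    have h1 : K * (ε / (K+1)) = ε * (K/(K+1)) := by ring
    have h2 : K / (K+1) < 1 := by
      rw [div_lt_one (by linarith)]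
      linarith
    calc K * (ε / (K+1)) = ε * (K/(K+1)) := h1
      _ < ε * 1 := by exact mul_lt_mul_of_pos_left h2 hε
      _ = ε := mul_one ε
  calc (n:ℝ)^(1/p) * j * (∑' k : ℕ, if n ≤ k then ‖c j k - c j (k+r)‖ else 0)
      ≤ (n:ℝ)^(1/p) * j * B := by
        apply mul_le_mul_of_nonneg_left htsum hnp
    _ ≤ K * ε' := hfin1
    _ < ε := hfin2

end
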